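/- There exists a finite rotation-puzzle instance 𝒜 over the two-color tile set T_2 (the two-color BOOL subpuzzle, representing a Boolean input variable) with one designated output boundary edge at its top, such that 𝒜 has exactly two solutions, one of which has color blue at the output edge and the other of which has color red at the output edge. -/

import Mathlib

/-- The two Tantrix colors used in the two-color tile set. -/
inductive Color where
  | red
  | blue
deriving DecidableEq

/-- A tile is its clockwise color sequence: a word of length 6 over the colors,
edges indexed `0, …, 5` clockwise. -/
abbrev Tile := Fin 6 → Color

/-- Cyclic rotation of a tile by `k` steps: edge `i` of the rotated tile carries the
color of edge `i + k` of the original sequence.  Two solutions are compared as the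
assigned rotated color sequences, so orientations of a tile with identical color
sequences are identified. -/
def rotTile (k : Fin 6) (t : Tile) : Tile := fun i => t (i + k)

open Color in
/-- The two-color tile set `T₂`, consisting of the 8 color sequences
bbrrrr, rrbbbb, brrbrr, rbbrbb, rbrrrb, brbbbr, bbbbbb, rrrrrr. -/
def T2 : Set Tile :=
  { ![blue,blue,red,red,red,red],
    ![red,red,blue,blue,blue,blue],
    ![blue,red,red,blue,red,red],
    ![red,blue,blue,red,blue,blue],
    ![red,blue,red,red,red,blue],
    ![blue,red,blue,blue,blue,red],
    ![blue,blue,blue,blue,blue,blue],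
    ![red,red,red,red,red,red] }

/-- The six neighbor offsets of the hexagonal layout of `ℤ²`, listed clockwise
starting from straight up; edge `i` of a tile at `x` is the edge shared with the
neighboring point `x + dirs i`, and opposite directions differ by `3` (mod 6).
Two points are neighbors exactly if their difference is one of these offsets. -/
def dirs : Fin 6 → ℤ × ℤ := ![(0,1), (1,1), (1,0), (0,-1), (-1,-1), (-1,0)]

/-- A finite rotation-puzzle instance over the tile set `T2`:
a function from a finite set of points of `ℤ²` to `T2`. -/
structure Puzzle where
  tiles : ℤ × ℤ → Option Tile
  finite : {x | tiles x ≠ none}.Finite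
  memT2 : ∀ x t, tiles x = some t → t ∈ T2

/-- `sol` is a solution of the instance `P`: it assigns to each occupied point a
cyclic rotation of the tile placed there, such that for every pair of neighboring
occupied points the two assigned sequences give the same color to their joint edge
(edge `d` of the tile at `x` is glued to edge `d + 3` of the tile at `x + dirs d`). -/
def IsSolution (P : Puzzle) (sol : ℤ × ℤ → Option Tile) : Prop :=
  (∀ x, (P.tiles x = none → sol x = none) ∧
    (∀ t, P.tiles x = some t → ∃ k : Fin 6, sol x = some (rotTile k t))) ∧
  (∀ (x : ℤ × ℤ) (d : Fin 6) (s s' : Tile),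
    sol x = some s → sol (x + dirs d) = some s' → s d = s' (d + 3))

/-- `(x, d)` is a boundary edge of `P`: the point `x` is occupied and its
neighbor in direction `d` is not. -/
def IsBoundary (P : Puzzle) (x : ℤ × ℤ) (d : Fin 6) : Prop :=
  P.tiles x ≠ none ∧ P.tiles (x + dirs d) = none

/-- The solution `sol` has color `c` at the edge in direction `d` of the tile at `x`. -/
def SolColor (sol : ℤ × ℤ → Option Tile) (x : ℤ × ℤ) (d : Fin 6) (c : Color) : Prop :=
  ∃ s, sol x = some s ∧ s d = c

/-! A domino of two tiles, the second one plain red, already behaves as a Boolean variable: a red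
tile reads red on every edge in every rotation, so the only constraint on the tile `brrbrr` next to
it is a red joint edge. Of the three distinct rotations of `brrbrr` exactly two are red there, and
they show blue and red respectively on the top edge. -/

open Color

theorem dirs_ne_zero (d : Fin 6) : dirs d ≠ 0 := by
  revert d; decide

theorem dirs_injective : Function.Injective dirs := by
  decide

theorem dirs_add_three (d : Fin 6) : dirs (d + 3) = -dirs d := by
  revert d; decide

theorem rotTile_zero (t : Tile) : rotTile 0 t = t :=
  funext fun i => congrArg t (add_zero i)

def pairAt (p q : ℤ × ℤ) (s s' : Tile) : ℤ × ℤ → Option Tile :=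
  fun x => if x = p then some s else if x = q then some s' else none

section PairAt

variable {p q : ℤ × ℤ} {s s' : Tile}

theorem pairAt_left : pairAt p q s s' p = some s :=
  if_pos rfl

theorem pairAt_right (hpq : p ≠ q) : pairAt p q s s' q = some s' := by
  simp [pairAt, hpq.symm]

theorem pairAt_eq_none {x : ℤ × ℤ} : pairAt p q s s' x = none ↔ x ≠ p ∧ x ≠ q := by
  unfold pairAt; split_ifs <;> simp_all

theorem pairAt_eq_some {x : ℤ × ℤ} {u : Tile} (hpq : p ≠ q) :
    pairAt p q s s' x = some u ↔ (x = p ∧ u = s) ∨ (x = q ∧ u = s') := by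
  unfold pairAt; split_ifs <;> aesop

end PairAt

section Domino

variable (p : ℤ × ℤ) (e : Fin 6)

theorem ne_add_dirs : p ≠ p + dirs e := by
  simpa using dirs_ne_zero e

def domino (t t' : Tile) (ht : t ∈ T2) (ht' : t' ∈ T2) : Puzzle where
  tiles := pairAt p (p + dirs e) t t'
  finite := (Set.toFinite {p, p + dirs e}).subset fun x hx => by
    by_contra hpq
    simp only [Set.mem_insert_iff, Set.mem_singleton_iff, not_or] at hpq
    exact hx (pairAt_eq_none.mpr hpq)
  memT2 x u hu := by
    rcases (pairAt_eq_some (ne_add_dirs p e)).mp hu with ⟨-, rfl⟩ | ⟨-, rfl⟩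
    exacts [ht, ht']

theorem domino_tiles {t t' : Tile} (ht : t ∈ T2) (ht' : t' ∈ T2) :
    (domino p e t t' ht ht').tiles = pairAt p (p + dirs e) t t' :=
  rfl

theorem pairAt_edges_match {s s' : Tile} (hglue : s e = s' (e + 3)) (x : ℤ × ℤ) (d : Fin 6)
    (u u' : Tile) (hu : pairAt p (p + dirs e) s s' x = some u)
    (hu' : pairAt p (p + dirs e) s s' (x + dirs d) = some u') : u d = u' (d + 3) := by
  have hpq := ne_add_dirs p e
  rw [pairAt_eq_some hpq] at hu hu'
  rcases hu with ⟨hx, rfl⟩ | ⟨hx, rfl⟩ <;> subst x <;> rcases hu' with ⟨hx, rfl⟩ | ⟨hx, rfl⟩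
  · exact absurd hx (ne_add_dirs p d).symm
  · obtain rfl := dirs_injective (add_left_cancel hx)
    exact hglue
  · obtain rfl : d = e + 3 := by
      apply dirs_injective
      rw [dirs_add_three, eq_neg_iff_add_eq_zero, add_comm]
      simpa [add_assoc] using hx
    rw [add_assoc, show (3 : Fin 6) + 3 = 0 from rfl, add_zero]
    exact hglue.symm
  · exact absurd hx (ne_add_dirs _ d).symm

theorem isSolution_domino_iff {t t' : Tile} (ht : t ∈ T2) (ht' : t' ∈ T2)
    (sol : ℤ × ℤ → Option Tile) :
    IsSolution (domino p e t t' ht ht') sol ↔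
      ∃ s s', (∃ k, s = rotTile k t) ∧ (∃ k', s' = rotTile k' t') ∧ s e = s' (e + 3) ∧
        sol = pairAt p (p + dirs e) s s' := by
  have hpq := ne_add_dirs p e
  constructor
  · rintro ⟨hrot, hglue⟩
    obtain ⟨k, hk⟩ := (hrot p).2 t pairAt_left
    obtain ⟨k', hk'⟩ := (hrot (p + dirs e)).2 t' (pairAt_right hpq)
    refine ⟨_, _, ⟨k, rfl⟩, ⟨k', rfl⟩, hglue p e _ _ hk hk', funext fun x => ?_⟩
    by_cases hxp : x = p
    · rw [hxp, hk, pairAt_left]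
    by_cases hxq : x = p + dirs e
    · rw [hxq, hk', pairAt_right hpq]
    rw [(hrot x).1 (pairAt_eq_none.mpr ⟨hxp, hxq⟩), pairAt_eq_none.mpr ⟨hxp, hxq⟩]
  · rintro ⟨s, s', ⟨k, rfl⟩, ⟨k', rfl⟩, hglue, rfl⟩
    refine ⟨fun x => ⟨fun h => pairAt_eq_none.mpr (pairAt_eq_none.mp h), fun u hu => ?_⟩,
      pairAt_edges_match p e hglue⟩
    rcases (pairAt_eq_some hpq).mp hu with ⟨rfl, rfl⟩ | ⟨rfl, rfl⟩
    exacts [⟨k, pairAt_left⟩, ⟨k', pairAt_right hpq⟩]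

end Domino

def brrbrr : Tile := ![blue, red, red, blue, red, red]

def rbrrbr : Tile := ![red, blue, red, red, blue, red]

def rrrrrr : Tile := ![red, red, red, red, red, red]

theorem brrbrr_mem_T2 : brrbrr ∈ T2 := by
  simp [T2, brrbrr]

theorem rrrrrr_mem_T2 : rrrrrr ∈ T2 := by
  simp [T2, rrrrrr]

theorem rotTile_rrrrrr (k : Fin 6) : rotTile k rrrrrr = rrrrrr := by
  revert k; decide

theorem rotTile_two_brrbrr : rotTile 2 brrbrr = rbrrbr := by
  decide

theorem rotTile_brrbrr_of_red (k : Fin 6) (h : rotTile k brrbrr 2 = red) :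
    rotTile k brrbrr = brrbrr ∨ rotTile k brrbrr = rbrrbr := by
  revert k; decide

/-- the two-color BOOL subpuzzle: one output boundary edge at the top; the instance has exactly two solutions, one with color blue and the other with color red at the output edge. -/
theorem two_color_BOOL_subpuzzle :
    ∃ (P : Puzzle) (xOut : ℤ × ℤ),
      IsBoundary P xOut 0 ∧
      ∃ sol₁ sol₂ : ℤ × ℤ → Option Tile,
        IsSolution P sol₁ ∧ IsSolution P sol₂ ∧ sol₁ ≠ sol₂ ∧
        SolColor sol₁ xOut 0 Color.blue ∧ SolColor sol₂ xOut 0 Color.red ∧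
        (∀ sol : ℤ × ℤ → Option Tile, IsSolution P sol → sol = sol₁ ∨ sol = sol₂) := by
  have hsol := isSolution_domino_iff 0 2 brrbrr_mem_T2 rrrrrr_mem_T2
  refine ⟨domino 0 2 brrbrr rrrrrr brrbrr_mem_T2 rrrrrr_mem_T2, 0,
    ⟨by simp [domino_tiles, pairAt_left], by rw [domino_tiles, pairAt_eq_none]; decide⟩,
    pairAt 0 (0 + dirs 2) brrbrr rrrrrr, pairAt 0 (0 + dirs 2) rbrrbr rrrrrr,
    ?_, ?_, ?_, ⟨_, pairAt_left, rfl⟩, ⟨_, pairAt_left, rfl⟩, ?_⟩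
  · exact (hsol _).mpr ⟨_, _, ⟨0, (rotTile_zero _).symm⟩, ⟨0, (rotTile_zero _).symm⟩, rfl, rfl⟩
  · exact (hsol _).mpr ⟨_, _, ⟨2, rotTile_two_brrbrr.symm⟩, ⟨0, (rotTile_zero _).symm⟩, rfl, rfl⟩
  · intro h
    have := congrFun h 0
    simp only [pairAt_left, Option.some.injEq] at this
    exact absurd this (by decide)
  · intro sol h
    obtain ⟨s, s', ⟨k, rfl⟩, ⟨k', rfl⟩, hglue, rfl⟩ := (hsol sol).mp h
    rw [rotTile_rrrrrr] at hglue ⊢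
    rcases rotTile_brrbrr_of_red k hglue with h | h <;> simp [h]
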